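/- arXiv:2011.02538 — 4 statements merged into one kernel-verified Lean document; each statement's English description precedes it below -/
import Mathlib

section
/- Under the same setup (columns xi with ‖xi‖₂² = λi ∈ (0,1], |⟨x̄i,x̄j⟩| ≤ ι for i≠j, λ1 ≥ … ≥ λn), if additionally λr > λ_{r+1} + 2nι for some index r, then the eigenvalues γ1 ≥ … ≥ γn of XᵀX split: γ1,…,γr ∈ [λr - nι, λ1 + nι] and γ_{r+1},…,γn ∈ [λn - nι, λ_{r+1} + nι], and these two intervals are disjoint. -/
/-!
Write `A = XᵀX`. Its diagonal is `λ`, and because `‖xᵢ‖ ≤ 1` its off-diagonal entries are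
at most `ι` in absolute value; hence on vectors supported on a set `S` of coordinates the
quadratic form of `A` stays within `(n+1)ι ‖v‖²` of its diagonal part, whose Rayleigh
quotient lies in `[min_S λ, max_S λ]`. Instead of the continuity argument behind Gershgorin's
disc separation, eigenvalues are counted by a dimension argument: if `⟪v, Av⟫ ≥ c‖v‖²` on a
subspace `W`, then at least `dim W` eigenvalues are `≥ c`, for otherwise some nonzero `v ∈ W`
is orthogonal to every eigenvector with eigenvalue `≥ c`, and then `⟪v, Av⟫ < c‖v‖²`.
Taking `S = {0,…,r}`, `S = {r+1,…,n}` and all coordinates, and reading the counts off the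
sorted list `γ`, gives the four bounds; the gap hypothesis separates the two intervals.
-/

open Module Finset Matrix Polynomial
open scoped InnerProductSpace

theorem abs_real_inner_le_abs_inner_inv_norm_smul {F : Type*} [NormedAddCommGroup F]
    [InnerProductSpace ℝ F] {x y : F} (hx : ‖x‖ ≤ 1) (hy : ‖y‖ ≤ 1) :
    |⟪x, y⟫_ℝ| ≤ |⟪‖x‖⁻¹ • x, ‖y‖⁻¹ • y⟫_ℝ| := by
  rcases eq_or_ne x 0 with rfl | hx0
  · simp
  rcases eq_or_ne y 0 with rfl | hy0
  · simp
  rw [real_inner_smul_left, real_inner_smul_right, abs_mul, abs_mul, abs_inv, abs_inv,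
    abs_norm, abs_norm, ← mul_assoc, ← mul_inv, le_inv_mul_iff₀ (by positivity)]
  exact mul_le_of_le_one_left (abs_nonneg _) (mul_le_one₀ hx (norm_nonneg _) hy)

namespace OrthonormalBasis

variable {E : Type*} [NormedAddCommGroup E] [InnerProductSpace ℝ E] {κ : Type*} [Fintype κ]
  {T : E →ₗ[ℝ] E} {b : OrthonormalBasis κ ℝ E} {μ : κ → ℝ}

theorem inner_map_right_eq_mul (hb : ∀ i, T (b i) = μ i • b i) (i : κ) (v : E) :
    ⟪b i, T v⟫_ℝ = μ i * ⟪b i, v⟫_ℝ := by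
  conv_lhs => rw [← b.sum_repr' v]
  simp only [map_sum, map_smul, hb, smul_smul]
  rw [b.orthonormal.inner_right_fintype]
  ring

theorem inner_map_self_eq_sum (hb : ∀ i, T (b i) = μ i • b i) (v : E) :
    ⟪v, T v⟫_ℝ = ∑ i, μ i * ⟪b i, v⟫_ℝ ^ 2 := by
  rw [← b.sum_inner_mul_inner]
  refine sum_congr rfl fun i _ => ?_
  rw [b.inner_map_right_eq_mul hb, real_inner_comm]
  ring

theorem finrank_le_card_filter_of_le_inner (hb : ∀ i, T (b i) = μ i • b i) {c : ℝ}
    (W : Submodule ℝ E) (hW : ∀ v ∈ W, c * ‖v‖ ^ 2 ≤ ⟪v, T v⟫_ℝ) :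
    finrank ℝ W ≤ #{i | c ≤ μ i} := by
  classical
  have : FiniteDimensional ℝ E := b.toBasis.finiteDimensional_of_finite
  by_contra! hlt
  let f : W →ₗ[ℝ] ({i // c ≤ μ i} → ℝ) :=
    LinearMap.pi fun i => innerₛₗ ℝ (b i.1) ∘ₗ W.subtype
  obtain ⟨⟨v, hvW⟩, hvf, hv0⟩ := Submodule.exists_mem_ne_zero_of_ne_bot
    (LinearMap.ker_ne_bot_of_finrank_lt (f := f) (by simpa [Fintype.card_subtype] using hlt))
  have hvanish : ∀ i, c ≤ μ i → ⟪b i, v⟫_ℝ = 0 := fun i hi => congrFun hvf ⟨i, hi⟩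
  obtain ⟨i₀, hi₀⟩ : ∃ i, ⟪b i, v⟫_ℝ ≠ 0 := by
    by_contra! h
    have hv : v = 0 := by rw [← b.sum_repr' v]; simp [h]
    subst hv
    exact hv0 rfl
  have hlt : ⟪v, T v⟫_ℝ < c * ‖v‖ ^ 2 := by
    rw [b.inner_map_self_eq_sum hb, ← b.sum_sq_inner_right, mul_sum]
    refine sum_lt_sum (fun i _ => ?_) ⟨i₀, mem_univ _, ?_⟩
    · rcases le_or_gt c (μ i) with h | h
      · simp [hvanish i h]
      · exact mul_le_mul_of_nonneg_right h.le (sq_nonneg _)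
    · have : μ i₀ < c := lt_of_not_ge fun h => hi₀ (hvanish i₀ h)
      exact mul_lt_mul_of_pos_right this (by positivity)
  exact (hW v hvW).not_gt hlt

theorem finrank_le_card_filter_of_inner_le (hb : ∀ i, T (b i) = μ i • b i) {θ : ℝ}
    (W : Submodule ℝ E) (hW : ∀ v ∈ W, ⟪v, T v⟫_ℝ ≤ θ * ‖v‖ ^ 2) :
    finrank ℝ W ≤ #{i | μ i ≤ θ} := by
  have hb' : ∀ i, (-T) (b i) = -μ i • b i := fun i => by simp [hb, neg_smul]
  simpa using b.finrank_le_card_filter_of_le_inner hb' (c := -θ) W fun v hv => by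
    simpa [inner_neg_right] using hW v hv

end OrthonormalBasis

namespace EuclideanSpace

variable {𝕜 : Type*} [RCLike 𝕜] {m : Type*} [Fintype m]

theorem finrank_span_basisFun (S : Finset m) :
    finrank 𝕜 (Submodule.span 𝕜 (Set.range fun j : S => basisFun m 𝕜 j)) = #S := by
  rw [finrank_span_eq_card, Fintype.card_coe]
  exact (basisFun m 𝕜).toBasis.linearIndependent.comp _ Subtype.val_injective

theorem apply_eq_zero_of_mem_span_basisFun {S : Finset m} {v : EuclideanSpace 𝕜 m}
    (hv : v ∈ Submodule.span 𝕜 (Set.range fun j : S => basisFun m 𝕜 j)) {k : m} (hk : k ∉ S) :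
    v k = 0 := by
  classical
  obtain ⟨c, rfl⟩ := (Submodule.mem_span_range_iff_exists_fun 𝕜).mp hv
  simp only [univ_eq_attach, basisFun_apply, WithLp.ofLp_sum, WithLp.ofLp_smul,
    PiLp.ofLp_single, Finset.sum_apply, Pi.smul_apply, Pi.single_apply, smul_eq_mul, mul_ite,
    mul_one, mul_zero]
  exact sum_eq_zero fun j _ => if_neg fun h : k = j => hk (h ▸ j.2)

end EuclideanSpace

theorem Finset.sum_mul_sq_le_sum_mul_sq {m : Type*} [Fintype m] {S : Finset m} {f g v : m → ℝ}
    (hfg : ∀ j ∈ S, f j ≤ g j) (hv : ∀ j ∉ S, v j = 0) :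
    ∑ j, f j * v j ^ 2 ≤ ∑ j, g j * v j ^ 2 := by
  refine sum_le_sum fun j _ => ?_
  by_cases hj : j ∈ S
  · exact mul_le_mul_of_nonneg_right (hfg j hj) (sq_nonneg _)
  · simp [hv j hj]

namespace Matrix

theorem transpose_mul_self_apply_eq_inner {d m : Type*} [Fintype d] (X : Matrix d m ℝ)
    {x : m → EuclideanSpace ℝ d} (hx : ∀ j k, x j k = X k j) (i j : m) :
    (Xᵀ * X) i j = ⟪x i, x j⟫_ℝ := by
  simp [mul_apply, PiLp.inner_apply, hx, mul_comm]

variable {m : Type*} [Fintype m]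

theorem abs_dotProduct_mulVec_le {B : Matrix m m ℝ} {ι : ℝ} (hB : ∀ i j, |B i j| ≤ ι)
    (v : m → ℝ) : |v ⬝ᵥ B *ᵥ v| ≤ Fintype.card m * ι * ∑ i, v i ^ 2 := by
  rcases isEmpty_or_nonempty m with _ | ⟨⟨i₀⟩⟩
  · simp
  have hι : 0 ≤ ι := (abs_nonneg _).trans (hB i₀ i₀)
  calc |v ⬝ᵥ B *ᵥ v| ≤ ∑ i, ∑ j, ι * (|v i| * |v j|) := by
        simp only [dotProduct, mulVec, mul_sum]
        refine (abs_sum_le_sum_abs _ _).trans (sum_le_sum fun i _ => ?_)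
        refine (abs_sum_le_sum_abs _ _).trans (sum_le_sum fun j _ => ?_)
        have := mul_le_mul_of_nonneg_right (hB i j) (by positivity : 0 ≤ |v i| * |v j|)
        rw [abs_mul, abs_mul]
        linarith
    _ = ι * (∑ i, |v i|) ^ 2 := by rw [sq, sum_mul_sum, mul_sum]; simp only [mul_sum]
    _ ≤ ι * (Fintype.card m * ∑ i, |v i| ^ 2) := by
        gcongr
        exact sq_sum_le_card_mul_sum_sq
    _ = Fintype.card m * ι * ∑ i, v i ^ 2 := by simp [sq, mul_assoc, mul_left_comm]

theorem abs_dotProduct_mulVec_sub_sum_diag_le {A : Matrix m m ℝ} {ι : ℝ} (hι : 0 ≤ ι)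
    (hoff : ∀ i j, i ≠ j → |A i j| ≤ ι) (v : m → ℝ) :
    |v ⬝ᵥ A *ᵥ v - ∑ i, A i i * v i ^ 2| ≤ Fintype.card m * ι * ∑ i, v i ^ 2 := by
  classical
  have hsplit : v ⬝ᵥ A *ᵥ v - ∑ i, A i i * v i ^ 2
      = v ⬝ᵥ (A - diagonal fun i => A i i) *ᵥ v := by
    rw [sub_mulVec, dotProduct_sub]
    congr 1
    simp [dotProduct, mulVec_diagonal, sq, mul_left_comm]
  rw [hsplit]
  refine abs_dotProduct_mulVec_le (fun i j => ?_) v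
  by_cases hij : i = j
  · simp [hij, hι]
  · simpa [hij] using hoff i j hij

variable [DecidableEq m]

theorem inner_toEuclideanLin_self (A : Matrix m m ℝ) (v : EuclideanSpace ℝ m) :
    ⟪v, toEuclideanLin A v⟫_ℝ = v.ofLp ⬝ᵥ A *ᵥ v.ofLp := by
  simp [EuclideanSpace.inner_eq_star_dotProduct, dotProduct_comm, toLpLin_apply]

namespace IsHermitian

theorem toEuclideanLin_eigenvectorBasis {A : Matrix m m ℝ} (hA : A.IsHermitian) (i : m) :
    toEuclideanLin A (hA.eigenvectorBasis i) = hA.eigenvalues i • hA.eigenvectorBasis i := by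
  ext1
  simp [toLpLin_apply, hA.mulVec_eigenvectorBasis]

theorem card_filter_eq_of_charpoly_eq {A : Matrix m m ℝ} (hA : A.IsHermitian) {γ : m → ℝ}
    (hγ : A.charpoly = ∏ i, (X - C (γ i))) (p : ℝ → Prop) [DecidablePred p] :
    #{i | p (γ i)} = #{i | p (hA.eigenvalues i)} := by
  have hγroots : A.charpoly.roots = univ.val.map γ := by
    rw [hγ, roots_prod _ _ (prod_ne_zero_iff.2 fun i _ => X_sub_C_ne_zero (γ i))]
    simp
  have hroots : univ.val.map γ = univ.val.map hA.eigenvalues := by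
    simpa [hγroots] using hA.roots_charpoly_eq_eigenvalues
  have := congrArg (Multiset.countP p) hroots
  rwa [Multiset.countP_map, Multiset.countP_map] at this

variable {A : Matrix m m ℝ} (hA : A.IsHermitian) {ι : ℝ} (hι : 0 ≤ ι)
  (hoff : ∀ i j, i ≠ j → |A i j| ≤ ι) {S : Finset m}
include hA hι hoff

theorem card_le_card_filter_le_eigenvalues {a : ℝ} (ha : ∀ j ∈ S, a ≤ A j j) :
    #S ≤ #{i | a - Fintype.card m * ι ≤ hA.eigenvalues i} := by
  rw [← EuclideanSpace.finrank_span_basisFun (𝕜 := ℝ) S]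
  refine hA.eigenvectorBasis.finrank_le_card_filter_of_le_inner
    hA.toEuclideanLin_eigenvectorBasis _ fun v hv => ?_
  have hdiag := sum_mul_sq_le_sum_mul_sq (f := fun _ => a) (g := fun i => A i i) ha
    fun j hj => EuclideanSpace.apply_eq_zero_of_mem_span_basisFun hv hj
  have hform := abs_le.mp (abs_dotProduct_mulVec_sub_sum_diag_le hι hoff v.ofLp)
  rw [← mul_sum] at hdiag
  rw [inner_toEuclideanLin_self, EuclideanSpace.real_norm_sq_eq]
  linarith [hform.1]

theorem card_le_card_filter_eigenvalues_le {b : ℝ} (hb : ∀ j ∈ S, A j j ≤ b) :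
    #S ≤ #{i | hA.eigenvalues i ≤ b + Fintype.card m * ι} := by
  rw [← EuclideanSpace.finrank_span_basisFun (𝕜 := ℝ) S]
  refine hA.eigenvectorBasis.finrank_le_card_filter_of_inner_le
    hA.toEuclideanLin_eigenvectorBasis _ fun v hv => ?_
  have hdiag := sum_mul_sq_le_sum_mul_sq (f := fun i => A i i) (g := fun _ => b) hb
    fun j hj => EuclideanSpace.apply_eq_zero_of_mem_span_basisFun hv hj
  have hform := abs_le.mp (abs_dotProduct_mulVec_sub_sum_diag_le hι hoff v.ofLp)
  rw [← mul_sum] at hdiag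
  rw [inner_toEuclideanLin_self, EuclideanSpace.real_norm_sq_eq]
  linarith [hform.2]

end IsHermitian

end Matrix

namespace Antitone

variable {α : Type*} [LinearOrder α] {n : ℕ} {γ : Fin n → α}

theorem le_apply_of_le_card_filter (hγ : Antitone γ) {c : α} {k : ℕ}
    (hk : k ≤ #{i | c ≤ γ i}) {i : Fin n} (hi : (i : ℕ) < k) : c ≤ γ i := by
  by_contra! h
  have hsub : ({j | c ≤ γ j} : Finset (Fin n)) ⊆ Iio i := fun j hj => by
    simp only [mem_filter, mem_univ, true_and] at hj
    exact mem_Iio.2 (lt_of_not_ge fun hij => (hj.trans (hγ hij)).not_gt h)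
  have := (card_le_card hsub).trans_eq (Fin.card_Iio i)
  omega

theorem apply_le_of_le_card_filter (hγ : Antitone γ) {θ : α} {k : ℕ}
    (hk : k ≤ #{i | γ i ≤ θ}) {i : Fin n} (hi : n ≤ i + k) : γ i ≤ θ := by
  by_contra! h
  have hsub : ({j | γ j ≤ θ} : Finset (Fin n)) ⊆ Ioi i := fun j hj => by
    simp only [mem_filter, mem_univ, true_and] at hj
    exact mem_Ioi.2 (lt_of_not_ge fun hji => ((hj.trans_lt h).trans_le (hγ hji)).false)
  have := (card_le_card hsub).trans_eq (Fin.card_Ioi i)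
  omega

end Antitone

theorem stmt_4_general (d n : ℕ) (ι : ℝ) (hι : 0 ≤ ι) (X : Matrix (Fin d) (Fin (n + 1)) ℝ)
    (x : Fin (n + 1) → EuclideanSpace ℝ (Fin d))
    (hx : ∀ j i, x j i = X i j)
    (lam : Fin (n + 1) → ℝ) (hlam : ∀ j, lam j = ‖x j‖ ^ 2)
    (hsort : Antitone lam)
    (hle1 : ∀ j, lam j ≤ 1)
    (hortho : ∀ i j, i ≠ j →
      abs ((inner ℝ (‖x i‖⁻¹ • x i) (‖x j‖⁻¹ • x j) : ℝ)) ≤ ι)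
    (r : Fin n)
    (hgap : lam r.succ + 2 * (n + 1) * ι < lam r.castSucc)
    (γ : Fin (n + 1) → ℝ) (hγsort : Antitone γ)
    (hchar : (X.transpose * X).charpoly =
      ∏ i : Fin (n + 1), (Polynomial.X - Polynomial.C (γ i))) :
    (∀ i : Fin (n + 1), i ≤ r.castSucc →
      γ i ∈ Set.Icc (lam r.castSucc - (n + 1) * ι) (lam 0 + (n + 1) * ι)) ∧
    (∀ i : Fin (n + 1), r.castSucc < i →
      γ i ∈ Set.Icc (lam (Fin.last n) - (n + 1) * ι) (lam r.succ + (n + 1) * ι)) ∧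
    lam r.succ + (n + 1) * ι < lam r.castSucc - (n + 1) * ι := by
  have hA : (Xᵀ * X).IsHermitian := by simpa using isHermitian_conjTranspose_mul_self X
  have hdiag (j) : (Xᵀ * X) j j = lam j := by
    rw [transpose_mul_self_apply_eq_inner X hx, real_inner_self_eq_norm_sq, hlam]
  have hnorm (j) : ‖x j‖ ≤ 1 := (sq_le_one_iff₀ (norm_nonneg _)).mp (hlam j ▸ hle1 j)
  have hoff (i j) (hij : i ≠ j) : |(Xᵀ * X) i j| ≤ ι := by
    rw [transpose_mul_self_apply_eq_inner X hx]
    exact (abs_real_inner_le_abs_inner_inv_norm_smul (hnorm i) (hnorm j)).trans (hortho i j hij)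
  have lower (S : Finset (Fin (n + 1))) (a : ℝ) (ha : ∀ j ∈ S, a ≤ lam j) :
      #S ≤ #{i | a - (n + 1) * ι ≤ γ i} := by
    rw [hA.card_filter_eq_of_charpoly_eq hchar]
    simpa using hA.card_le_card_filter_le_eigenvalues hι hoff fun j hj => hdiag j ▸ ha j hj
  have upper (S : Finset (Fin (n + 1))) (b : ℝ) (hb : ∀ j ∈ S, lam j ≤ b) :
      #S ≤ #{i | γ i ≤ b + (n + 1) * ι} := by
    rw [hA.card_filter_eq_of_charpoly_eq hchar (· ≤ b + (n + 1) * ι)]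
    simpa using hA.card_le_card_filter_eigenvalues_le hι hoff fun j hj => hdiag j ▸ hb j hj
  refine ⟨fun i hi => ⟨?_, ?_⟩, fun i hi => ⟨?_, ?_⟩, by linarith⟩
  · refine hγsort.le_apply_of_le_card_filter
      (lower (Iic r.castSucc) _ fun j hj => hsort (mem_Iic.1 hj)) ?_
    rw [Fin.card_Iic]
    exact Nat.lt_succ_of_le hi
  · exact hγsort.apply_le_of_le_card_filter (upper univ _ fun j _ => hsort (Fin.zero_le j))
      (by simp)
  · exact hγsort.le_apply_of_le_card_filter (lower univ _ fun j _ => hsort (Fin.le_last j))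
      (by simpa using i.isLt)
  · refine hγsort.apply_le_of_le_card_filter (upper (Ioi r.castSucc) _ fun j hj =>
      hsort (Fin.castSucc_lt_iff_succ_le.1 (mem_Ioi.1 hj))) ?_
    rw [Fin.card_Ioi]
    have : (r.castSucc : ℕ) < i := hi
    omega

/-- Gershgorin with a spectral gap: with columns as before, if
`λ_r > λ_{r+1} + 2(n+1)ι`, then the decreasingly sorted eigenvalues
`γ₀ ≥ … ≥ γₙ` of `XᵀX` (enumerated with multiplicity via the characteristic
polynomial) split: `γ₀,…,γ_r ∈ [λ_r - (n+1)ι, λ₀ + (n+1)ι]` and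
`γ_{r+1},…,γₙ ∈ [λₙ - (n+1)ι, λ_{r+1} + (n+1)ι]`, two disjoint intervals.
(Here there are `n+1` data points.) -/
theorem stmt_4 (d n : ℕ) (ι : ℝ) (hι : 0 ≤ ι) (X : Matrix (Fin d) (Fin (n + 1)) ℝ)
    (x : Fin (n + 1) → EuclideanSpace ℝ (Fin d))
    (hx : ∀ j i, x j i = X i j)
    (lam : Fin (n + 1) → ℝ) (hlam : ∀ j, lam j = ‖x j‖ ^ 2)
    (hsort : Antitone lam)
    (hpos : ∀ j, 0 < lam j) (hle1 : ∀ j, lam j ≤ 1)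
    (hortho : ∀ i j, i ≠ j →
      abs ((inner ℝ (‖x i‖⁻¹ • x i) (‖x j‖⁻¹ • x j) : ℝ)) ≤ ι)
    (r : Fin n)
    (hgap : lam r.succ + 2 * (n + 1) * ι < lam r.castSucc)
    (γ : Fin (n + 1) → ℝ) (hγsort : Antitone γ)
    (hchar : (X.transpose * X).charpoly =
      ∏ i : Fin (n + 1), (Polynomial.X - Polynomial.C (γ i))) :
    (∀ i : Fin (n + 1), i ≤ r.castSucc →
      γ i ∈ Set.Icc (lam r.castSucc - (n + 1) * ι) (lam 0 + (n + 1) * ι)) ∧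
    (∀ i : Fin (n + 1), r.castSucc < i →
      γ i ∈ Set.Icc (lam (Fin.last n) - (n + 1) * ι) (lam r.succ + (n + 1) * ι)) ∧
    lam r.succ + (n + 1) * ι < lam r.castSucc - (n + 1) * ι :=
  stmt_4_general d n ι hι X x hx lam hlam hsort hle1 hortho r hgap γ hγsort hchar
end

section
/- Let x1,…,xn ∈ ℝ^d with ‖xi‖₂ ≤ 1, let P_{-1} be the orthogonal projection onto span{x2,…,xn} and P1 = P - P_{-1} where P projects onto span{x1,…,xn}. If ‖P_{-1}x̄1‖₂ ≤ 2√n·ι with x̄1 = x1/‖x1‖₂ and 4nι² ≤ 1, then the rank-one matrix H1 = (P1 X)(P1 X)ᵀ, where X = (x1,…,xn), has exactly one nonzero eigenvalue, equal to ‖P1 x1‖₂², which lies in [λ1(1 - 4nι²), λ1] where λ1 = ‖x1‖₂²; its eigenspace is the (one-dimensional) column space of P1. -/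
/-!
Every `xⱼ` with `j ≠ 0` lies in `span{x₁,…,xₙ} ⊆ span{x₀,…,xₙ}`, so `P₁xⱼ = 0` and
`H₁ v = ⟪P₁x₀, v⟫ P₁x₀` is the rank-one operator of the single vector `P₁x₀`, whose only
nonzero eigenvalue is `‖P₁x₀‖²`, with eigenspace `span{P₁x₀}`. Since `x₀` lies in the larger
span, `P₁x₀ = x₀ - P₋x₀`, and Pythagoras gives `‖P₁x₀‖² = λ₀ - ‖P₋x₀‖² = λ₀ (1 - ‖P₋x̄₀‖²)`.
-/

open Submodule

section RankOne

variable {E : Type*} [NormedAddCommGroup E] [InnerProductSpace ℝ E]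

theorem inner_smul_eq_norm_sq_smul_of_mem_span_singleton {u v : E} (hv : v ∈ span ℝ {u}) :
    inner ℝ u v • u = ‖u‖ ^ 2 • v := by
  obtain ⟨c, rfl⟩ := mem_span_singleton.mp hv
  rw [real_inner_smul_right, real_inner_self_eq_norm_sq, smul_smul, mul_comm]

theorem eq_zero_or_eq_norm_sq_of_inner_smul_eq_smul {u v : E} {γ : ℝ} (hv : v ≠ 0)
    (h : inner ℝ u v • u = γ • v) : γ = 0 ∨ (γ = ‖u‖ ^ 2 ∧ v ∈ span ℝ {u}) := by
  rcases eq_or_ne γ 0 with hγ | hγ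
  · exact Or.inl hγ
  have hv_mem : v ∈ span ℝ {u} := by
    rw [← smul_mem_iff _ hγ, ← h]
    exact smul_mem _ _ (mem_span_singleton_self u)
  exact Or.inr ⟨smul_left_injective ℝ hv
    (h.symm.trans (inner_smul_eq_norm_sq_smul_of_mem_span_singleton hv_mem)), hv_mem⟩

end RankOne

section Projection

variable {E : Type*} [NormedAddCommGroup E] [InnerProductSpace ℝ E]
  {K : Submodule ℝ E} [K.HasOrthogonalProjection]

theorem norm_sub_starProjection_sq (v : E) :
    ‖v - K.starProjection v‖ ^ 2 = ‖v‖ ^ 2 - ‖K.starProjection v‖ ^ 2 := by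
  rw [norm_sq_eq_add_norm_sq_projection v K, ← starProjection_orthogonal_val,
    starProjection_apply, starProjection_apply, norm_coe, norm_coe, add_sub_cancel_left]

theorem norm_starProjection_eq_norm_mul (v : E) :
    ‖K.starProjection v‖ = ‖v‖ * ‖K.starProjection (‖v‖⁻¹ • v)‖ := by
  rcases eq_or_ne v 0 with rfl | hv
  · simp
  rw [map_smul, norm_smul, norm_inv, norm_norm, mul_inv_cancel_left₀ (norm_ne_zero_iff.mpr hv)]

end Projection

theorem stmt_6_general (d n : ℕ) (ι : ℝ)
    (x : Fin (n + 1) → EuclideanSpace ℝ (Fin d))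
    (lam0 : ℝ) (hlam0 : lam0 = ‖x 0‖ ^ 2)
    (Km K : Submodule ℝ (EuclideanSpace ℝ (Fin d)))
    (hKm : Km = Submodule.span ℝ (x '' {j | j ≠ 0}))
    (hK : K = Submodule.span ℝ (Set.range x))
    (Pm P1 : EuclideanSpace ℝ (Fin d) → EuclideanSpace ℝ (Fin d))
    (hPm : ∀ v, Pm v = (Submodule.orthogonalProjectionOnto Km v : EuclideanSpace ℝ (Fin d)))
    (hP1 : ∀ v, P1 v =
      (Submodule.orthogonalProjectionOnto K v : EuclideanSpace ℝ (Fin d)) - Pm v)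
    (hproj : ‖Pm (‖x 0‖⁻¹ • x 0)‖ ≤ 2 * Real.sqrt (n + 1) * ι)
    (H1 : EuclideanSpace ℝ (Fin d) → EuclideanSpace ℝ (Fin d))
    (hH1 : ∀ v, H1 v = ∑ i, (inner ℝ (P1 (x i)) v : ℝ) • P1 (x i)) :
    (lam0 * (1 - 4 * (n + 1) * ι ^ 2) ≤ ‖P1 (x 0)‖ ^ 2 ∧
      ‖P1 (x 0)‖ ^ 2 ≤ lam0) ∧
    (∀ (γ : ℝ) (v : EuclideanSpace ℝ (Fin d)), v ≠ 0 → H1 v = γ • v →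
      γ = 0 ∨ (γ = ‖P1 (x 0)‖ ^ 2 ∧ v ∈ Submodule.span ℝ {P1 (x 0)})) ∧
    (∀ v ∈ Submodule.span ℝ ({P1 (x 0)} : Set (EuclideanSpace ℝ (Fin d))),
      H1 v = ‖P1 (x 0)‖ ^ 2 • v) := by
  simp only [← starProjection_apply] at hPm hP1
  have hK_mem (i) : x i ∈ K := hK ▸ subset_span ⟨i, rfl⟩
  have hP1_of_ne (j) (hj : j ≠ 0) : P1 (x j) = 0 := by
    have hKm_mem : x j ∈ Km := hKm ▸ subset_span ⟨j, hj, rfl⟩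
    rw [hP1, hPm, starProjection_eq_self_iff.mpr (hK_mem j),
      starProjection_eq_self_iff.mpr hKm_mem, sub_self]
  have hH1_rankOne (v) : H1 v = inner ℝ (P1 (x 0)) v • P1 (x 0) := by
    rw [hH1, Finset.sum_eq_single 0 (fun i _ hi => by rw [hP1_of_ne i hi, smul_zero])
      (by simp)]
  have hP1_norm_sq : ‖P1 (x 0)‖ ^ 2 = lam0 - ‖Pm (x 0)‖ ^ 2 := by
    rw [hP1, hPm, starProjection_eq_self_iff.mpr (hK_mem 0), norm_sub_starProjection_sq, hlam0]
  have hPm_norm_sq : ‖Pm (x 0)‖ ^ 2 ≤ lam0 * (4 * (n + 1) * ι ^ 2) := by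
    have hle : ‖Pm (x 0)‖ ≤ ‖x 0‖ * (2 * Real.sqrt (n + 1) * ι) := by
      rw [hPm, norm_starProjection_eq_norm_mul, ← hPm]
      exact mul_le_mul_of_nonneg_left hproj (norm_nonneg _)
    calc ‖Pm (x 0)‖ ^ 2 ≤ (‖x 0‖ * (2 * Real.sqrt (n + 1) * ι)) ^ 2 :=
          pow_le_pow_left₀ (norm_nonneg _) hle 2
      _ = lam0 * (4 * (n + 1) * ι ^ 2) := by
        rw [hlam0, mul_pow, mul_pow, mul_pow, Real.sq_sqrt (by positivity)]; ring
  exact ⟨⟨by linarith, by linarith [sq_nonneg ‖Pm (x 0)‖]⟩,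
    fun γ v hv hγv =>
      eq_zero_or_eq_norm_sq_of_inner_smul_eq_smul hv ((hH1_rankOne v).symm.trans hγv),
    fun v hv => (hH1_rankOne v).trans (inner_smul_eq_norm_sq_smul_of_mem_span_singleton hv)⟩

/-- The rank-one block `H₁ = (P₁X)(P₁X)ᵀ`: with `P₋` the projection onto
`span{x₁,…,xₙ}`, `P` the projection onto `span{x₀,…,xₙ}`, `P₁ = P - P₋`, if
`‖P₋x̄₀‖ ≤ 2√(n+1) ι` and `4(n+1)ι² ≤ 1`, then `H₁ v = ∑ᵢ ⟪P₁xᵢ, v⟫ P₁xᵢ` has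
exactly one nonzero eigenvalue `‖P₁x₀‖² ∈ [λ₀(1-4(n+1)ι²), λ₀]`, with
eigenspace the span of `P₁x₀` (the column space of `P₁`).
(Here there are `n+1` data points, indexed from `0`.) -/
theorem stmt_6 (d n : ℕ) (ι : ℝ) (hι : 0 ≤ ι)
    (x : Fin (n + 1) → EuclideanSpace ℝ (Fin d))
    (hxnorm : ∀ i, ‖x i‖ ≤ 1) (hx0 : x 0 ≠ 0)
    (lam0 : ℝ) (hlam0 : lam0 = ‖x 0‖ ^ 2)
    (Km K : Submodule ℝ (EuclideanSpace ℝ (Fin d)))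
    (hKm : Km = Submodule.span ℝ (x '' {j | j ≠ 0}))
    (hK : K = Submodule.span ℝ (Set.range x))
    (Pm P1 : EuclideanSpace ℝ (Fin d) → EuclideanSpace ℝ (Fin d))
    (hPm : ∀ v, Pm v = (Submodule.orthogonalProjectionOnto Km v : EuclideanSpace ℝ (Fin d)))
    (hP1 : ∀ v, P1 v =
      (Submodule.orthogonalProjectionOnto K v : EuclideanSpace ℝ (Fin d)) - Pm v)
    (hproj : ‖Pm (‖x 0‖⁻¹ • x 0)‖ ≤ 2 * Real.sqrt (n + 1) * ι)
    (hι2 : 4 * (n + 1) * ι ^ 2 ≤ 1)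
    (H1 : EuclideanSpace ℝ (Fin d) → EuclideanSpace ℝ (Fin d))
    (hH1 : ∀ v, H1 v = ∑ i, (inner ℝ (P1 (x i)) v : ℝ) • P1 (x i)) :
    (lam0 * (1 - 4 * (n + 1) * ι ^ 2) ≤ ‖P1 (x 0)‖ ^ 2 ∧
      ‖P1 (x 0)‖ ^ 2 ≤ lam0) ∧
    (∀ (γ : ℝ) (v : EuclideanSpace ℝ (Fin d)), v ≠ 0 → H1 v = γ • v →
      γ = 0 ∨ (γ = ‖P1 (x 0)‖ ^ 2 ∧ v ∈ Submodule.span ℝ {P1 (x 0)})) ∧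
    (∀ v ∈ Submodule.span ℝ ({P1 (x 0)} : Set (EuclideanSpace ℝ (Fin d))),
      H1 v = ‖P1 (x 0)‖ ^ 2 • v) :=
  stmt_6_general d n ι x lam0 hlam0 Km K hKm hK Pm P1 hPm hP1 hproj H1 hH1
end

section
/- (Hoffman–Wielandt for symmetric matrices) Let A, E ∈ ℝ^{n×n} be symmetric, with eigenvalues λ1 ≥ … ≥ λn of A and λ̂1 ≥ … ≥ λ̂n of A + E, both in decreasing order. Then Σ_{i=1}^n (λ̂i - λi)² ≤ ‖E‖_F². -/
/-!
Diagonalize `A = U diag(λ) Uᵀ` and `A + E = V diag(λ̂) Vᵀ` with orthogonal `U`, `V` whose columns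
follow the given orderings of the eigenvalues. With `W = UᵀV`, orthogonal invariance of the
Frobenius norm gives `‖E‖² = ‖W diag(λ̂) - diag(λ) W‖² = ∑ᵢⱼ Wᵢⱼ² (λ̂ⱼ - λᵢ)²`. The matrix `(Wᵢⱼ²)`
is doubly stochastic, so by Birkhoff's theorem this linear function of it is at least its minimum
over permutation matrices, `∑ᵢ (λ̂_σ(i) - λᵢ)²`; for decreasingly ordered `λ`, `λ̂` the
rearrangement inequality says that the identity permutation attains this minimum.
-/

open Matrix Polynomial Finset

theorem exists_equiv_comp_eq_of_map_univ_eq {ι κ α : Type*} [Fintype ι] [Fintype κ]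
    [DecidableEq α] {f : ι → α} {g : κ → α} (h : univ.val.map f = univ.val.map g) :
    ∃ e : ι ≃ κ, g ∘ e = f := by
  have hcard (c : α) : Fintype.card {i // f i = c} = Fintype.card {k // g k = c} := by
    simpa [Fintype.card_subtype, Multiset.count_map, Finset.card, Finset.filter_val, eq_comm]
      using congrArg (Multiset.count c) h
  exact ⟨Equiv.ofFiberEquiv fun c => Fintype.equivOfCardEq (hcard c),
    funext (Equiv.ofFiberEquiv_map _)⟩

theorem Polynomial.roots_fintype_prod_X_sub_C {R ι : Type*} [CommRing R] [IsDomain R]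
    [Fintype ι] (f : ι → R) : (∏ i, (X - C (f i))).roots = univ.val.map f := by
  rw [Polynomial.roots_prod]
  · simp
  · simp [Finset.prod_ne_zero_iff, Polynomial.X_sub_C_ne_zero]

theorem sum_sq_sub_le_sum_sq_sub_comp_perm {ι : Type*} [Fintype ι] [LinearOrder ι]
    {a b : ι → ℝ} (ha : Antitone a) (hb : Antitone b) (σ : Equiv.Perm ι) :
    ∑ i, (b i - a i) ^ 2 ≤ ∑ i, (b (σ i) - a i) ^ 2 := by
  have hsq : ∑ i, b (σ i) ^ 2 = ∑ i, b i ^ 2 := Equiv.sum_comp σ (b · ^ 2)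
  have hmul : ∑ i, b (σ i) * a i ≤ ∑ i, b i * a i :=
    (hb.monovary ha).sum_comp_perm_mul_le_sum_mul
  simp only [sub_sq, Finset.sum_add_distrib, Finset.sum_sub_distrib, mul_assoc, ← Finset.mul_sum]
  linarith

namespace Matrix

variable {n : Type*} [Fintype n]

theorem sum_sq_eq_trace_star_mul (M : Matrix n n ℝ) :
    ∑ i, ∑ j, M i j ^ 2 = trace (star M * M) := by
  simp only [trace, diag, mul_apply, star_apply, star_trivial, sq]
  exact Finset.sum_comm

variable [DecidableEq n]

theorem sum_sq_star_mul_mul_of_mem_unitaryGroup {U V : Matrix n n ℝ}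
    (hU : U ∈ unitaryGroup n ℝ) (hV : V ∈ unitaryGroup n ℝ) (M : Matrix n n ℝ) :
    ∑ i, ∑ j, (star U * M * V) i j ^ 2 = ∑ i, ∑ j, M i j ^ 2 := by
  rw [mem_unitaryGroup_iff] at hU hV
  rw [sum_sq_eq_trace_star_mul, sum_sq_eq_trace_star_mul, star_mul, star_mul, star_star]
  calc trace (star V * (star M * U) * (star U * M * V))
      = trace (star V * (star M * (U * star U) * M) * V) := by simp only [Matrix.mul_assoc]
    _ = trace (V * star V * (star M * M)) := by
        rw [hU, Matrix.mul_one, trace_mul_comm, ← Matrix.mul_assoc]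
    _ = trace (star M * M) := by rw [hV, Matrix.one_mul]

theorem hadamard_self_mem_doublyStochastic {W : Matrix n n ℝ} (hW : W ∈ unitaryGroup n ℝ) :
    W ⊙ W ∈ doublyStochastic ℝ n := by
  refine mem_doublyStochastic_iff_sum.mpr ⟨fun i j => mul_self_nonneg _, fun i => ?_, fun j => ?_⟩
  · simpa [mul_apply] using congrFun (congrFun (mem_unitaryGroup_iff.mp hW) i) i
  · simpa [mul_apply] using congrFun (congrFun (mem_unitaryGroup_iff'.mp hW) j) j

theorem le_sum_mul_of_mem_doublyStochastic {S : Matrix n n ℝ} (hS : S ∈ doublyStochastic ℝ n)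
    (c : n → n → ℝ) {m : ℝ} (hc : ∀ σ : Equiv.Perm n, m ≤ ∑ i, c i (σ i)) :
    m ≤ ∑ i, ∑ j, S i j * c i j := by
  rw [← SetLike.mem_coe, doublyStochastic_eq_convexHull_permMatrix] at hS
  refine convexHull_min (t := {S : Matrix n n ℝ | m ≤ ∑ i, ∑ j, S i j * c i j}) ?_
    (convex_halfSpace_ge ?_ m) hS
  · rintro _ ⟨σ, rfl⟩
    simpa [Equiv.Perm.permMatrix, PEquiv.toMatrix_apply] using hc σ
  · exact ⟨fun S T => by simp [add_mul, Finset.sum_add_distrib],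
      fun r S => by simp [Finset.mul_sum, mul_assoc]⟩

theorem submatrix_id_equiv_mem_unitaryGroup {α : Type*} [CommRing α] [StarRing α]
    {U : Matrix n n α} (hU : U ∈ unitaryGroup n α) (e : n ≃ n) :
    U.submatrix id e ∈ unitaryGroup n α := by
  rw [mem_unitaryGroup_iff, star_eq_conjTranspose, conjTranspose_submatrix, submatrix_mul_equiv,
    ← star_eq_conjTranspose, mem_unitaryGroup_iff.mp hU, submatrix_id_id]

theorem mul_diagonal_comp_equiv_mul_star {α : Type*} [CommRing α] [StarRing α]
    (U : Matrix n n α) (d : n → α) (e : n ≃ n) :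
    U * diagonal (d ∘ e) * star U =
      U.submatrix id e.symm * diagonal d * star (U.submatrix id e.symm) := by
  have hd : d = (d ∘ e) ∘ e.symm := by ext; simp
  conv_rhs => rw [hd]
  simp only [star_eq_conjTranspose, conjTranspose_submatrix]
  rw [← submatrix_diagonal_equiv (d ∘ e) e.symm, submatrix_mul_equiv, submatrix_mul_equiv,
    submatrix_id_id]

theorem IsHermitian.exists_mem_unitaryGroup_eq_mul_diagonal_mul_star {A : Matrix n n ℝ}
    (hA : A.IsHermitian) {lam : n → ℝ} (hchar : A.charpoly = ∏ i, (X - C (lam i))) :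
    ∃ U ∈ unitaryGroup n ℝ, A = U * diagonal lam * star U := by
  obtain ⟨e, he⟩ : ∃ e : n ≃ n, lam ∘ e = hA.eigenvalues := by
    apply exists_equiv_comp_eq_of_map_univ_eq
    rw [← roots_fintype_prod_X_sub_C, ← roots_fintype_prod_X_sub_C, ← hchar, hA.charpoly_eq]
    -- the cast `ℝ → ℝ` in `charpoly_eq` is `RCLike.ofReal`, definitionally the identity
    rfl
  refine ⟨_, submatrix_id_equiv_mem_unitaryGroup hA.eigenvectorUnitary.2 e.symm, ?_⟩
  rw [← mul_diagonal_comp_equiv_mul_star, he]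
  simpa [Unitary.conjStarAlgAut_apply] using hA.spectral_theorem

theorem star_mul_conj_sub_conj_mul {U V : Matrix n n ℝ} (hU : U ∈ unitaryGroup n ℝ)
    (hV : V ∈ unitaryGroup n ℝ) (a b : n → ℝ) :
    star U * (V * diagonal b * star V - U * diagonal a * star U) * V =
      star U * V * diagonal b - diagonal a * (star U * V) := by
  have hU' : star U * U = 1 := mem_unitaryGroup_iff'.mp hU
  have hV' : star V * V = 1 := mem_unitaryGroup_iff'.mp hV
  rw [Matrix.mul_sub, Matrix.sub_mul]
  congr 1
  · simp only [Matrix.mul_assoc, hV', Matrix.mul_one]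
  · simp only [← Matrix.mul_assoc, hU', Matrix.one_mul]

variable [LinearOrder n]

theorem sum_sq_sub_le_sum_sq_conj_sub_conj {U V : Matrix n n ℝ} (hU : U ∈ unitaryGroup n ℝ)
    (hV : V ∈ unitaryGroup n ℝ) {a b : n → ℝ} (ha : Antitone a) (hb : Antitone b) :
    ∑ i, (b i - a i) ^ 2 ≤
      ∑ i, ∑ j, (V * diagonal b * star V - U * diagonal a * star U) i j ^ 2 := by
  set W := star U * V
  have hW : W ∈ unitaryGroup n ℝ := mul_mem (Unitary.star_mem hU) hV
  calc ∑ i, (b i - a i) ^ 2 ≤ ∑ i, ∑ j, (W ⊙ W) i j * (b j - a i) ^ 2 :=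
        le_sum_mul_of_mem_doublyStochastic (hadamard_self_mem_doublyStochastic hW) _
          (sum_sq_sub_le_sum_sq_sub_comp_perm ha hb)
    _ = ∑ i, ∑ j, (W * diagonal b - diagonal a * W) i j ^ 2 := by
        refine Finset.sum_congr rfl fun i _ => Finset.sum_congr rfl fun j _ => ?_
        simp only [sub_apply, mul_diagonal, diagonal_mul, hadamard_apply]
        ring
    _ = _ := by
        rw [← star_mul_conj_sub_conj_mul hU hV, sum_sq_star_mul_mul_of_mem_unitaryGroup hU hV]

theorem IsHermitian.hoffman_wielandt {A B : Matrix n n ℝ} (hA : A.IsHermitian)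
    (hB : B.IsHermitian) {a b : n → ℝ} (ha : Antitone a) (hb : Antitone b)
    (hcharA : A.charpoly = ∏ i, (X - C (a i))) (hcharB : B.charpoly = ∏ i, (X - C (b i))) :
    ∑ i, (b i - a i) ^ 2 ≤ ∑ i, ∑ j, (B - A) i j ^ 2 := by
  obtain ⟨U, hU, rfl⟩ := hA.exists_mem_unitaryGroup_eq_mul_diagonal_mul_star hcharA
  obtain ⟨V, hV, rfl⟩ := hB.exists_mem_unitaryGroup_eq_mul_diagonal_mul_star hcharB
  exact sum_sq_sub_le_sum_sq_conj_sub_conj hU hV ha hb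

end Matrix

/-- Hoffman–Wielandt for real symmetric matrices: if `λ` and `λ̂` enumerate
(with multiplicity, in decreasing order) the eigenvalues of symmetric `A` and
`A + E`, then `∑ᵢ (λ̂ᵢ - λᵢ)² ≤ ‖E‖_F²`. -/
theorem stmt_9 (n : ℕ) (A E : Matrix (Fin n) (Fin n) ℝ)
    (hA : A.IsSymm) (hE : E.IsSymm)
    (lam lamh : Fin n → ℝ) (hlam : Antitone lam) (hlamh : Antitone lamh)
    (hcharA : A.charpoly = ∏ i : Fin n, (Polynomial.X - Polynomial.C (lam i)))
    (hcharAE : (A + E).charpoly =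
      ∏ i : Fin n, (Polynomial.X - Polynomial.C (lamh i))) :
    ∑ i, (lamh i - lam i) ^ 2 ≤ ∑ i, ∑ j, E i j ^ 2 := by
  have hAE : (A + E).IsHermitian := isHermitian_iff_isSymm.mpr (hA.add hE)
  simpa using (isHermitian_iff_isSymm.mpr hA).hoffman_wielandt hAE hlam hlamh hcharA hcharAE
end

section
/- In the setting of the previous statement, assume additionally that all η_t come from a fixed set on which q := sup_η (1 - 2γ_{n-1}η/n)/(1 - 2γ_nη/n) < 1, u_0^{(n)} ≠ 0, and k > (1/2)·log(γn ε (u_0^{(n)})²/(γ1 n Σ_{i=1}^n (u_0^{(i)})²))/log q. Then γn ≤ (u_kᵀ Γ u_k)/(Σ_{i=1}^n (u_k^{(i)})²) ≤ (1+ε)·γn. That is, the Rayleigh quotient of the GD iterate restricted to the data manifold approaches the smallest nonzero eigenvalue γn. -/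
/-!
Each coordinate of the iterate is multiplied at every step by its own contraction factor, and
the factor of every coordinate other than the last one is at most `q` times the factor of the
last one. Hence, relative to the last coordinate, all others decay like `q ^ k`; once `q ^ (2k)`
is below the threshold set by `k`, the mass of `u_k` off the last coordinate is at most a
`ε γ_last / γ_0` fraction of its last coordinate, which pins the Rayleigh quotient between
`γ_last` and `(1 + ε) γ_last`.
-/

open Finset Real

theorem iterate_ne_zero {x a : ℕ → ℝ} (hx : ∀ k, x (k + 1) = a k * x k) (ha : ∀ k, a k ≠ 0)
    (h0 : x 0 ≠ 0) (k : ℕ) : x k ≠ 0 := by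
  induction k with
  | zero => exact h0
  | succ k ih => rw [hx]; exact mul_ne_zero (ha k) ih

/-- The paper's `(x_k / y_k)² ≤ q^{2k} (x_0 / y_0)²`, with denominators cleared. -/
theorem sq_mul_sq_le_pow_mul {x y a b : ℕ → ℝ} {q : ℝ} (hx : ∀ k, x (k + 1) = a k * x k)
    (hy : ∀ k, y (k + 1) = b k * y k) (hab : ∀ k, |a k| ≤ q * |b k|) (k : ℕ) :
    x k ^ 2 * y 0 ^ 2 ≤ q ^ (2 * k) * x 0 ^ 2 * y k ^ 2 := by
  induction k with
  | zero => simp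
  | succ k ih =>
    have hsq : a k ^ 2 ≤ q ^ 2 * b k ^ 2 := by
      simpa only [mul_pow, sq_abs] using pow_le_pow_left₀ (abs_nonneg _) (hab k) 2
    have hnonneg : 0 ≤ q ^ (2 * k) * x 0 ^ 2 * y k ^ 2 := by
      have := (even_two_mul k).pow_nonneg q
      positivity
    calc x (k + 1) ^ 2 * y 0 ^ 2 = a k ^ 2 * (x k ^ 2 * y 0 ^ 2) := by rw [hx]; ring
      _ ≤ q ^ 2 * b k ^ 2 * (q ^ (2 * k) * x 0 ^ 2 * y k ^ 2) := by gcongr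
      _ = q ^ (2 * (k + 1)) * x 0 ^ 2 * y (k + 1) ^ 2 := by rw [hy]; ring

theorem pow_lt_of_log_div_log_lt {q A : ℝ} {m : ℕ} (hq0 : 0 < q) (hq1 : q < 1) (hA : 0 < A)
    (h : log A / log q < m) : q ^ m < A := by
  rw [← log_lt_log_iff (pow_pos hq0 m) hA, log_pow]
  rwa [div_lt_iff_of_neg (log_neg hq0 hq1)] at h

theorem contraction_factor_pos {N η g g₀ : ℝ} (hη : 0 < η) (hη₀ : η < N / (2 * g₀))
    (hg₀ : 0 < g₀) (hg : g ≤ g₀) : 0 < 1 - 2 * η * g / N := by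
  have hN : 0 < N := (div_pos_iff_of_pos_right (by positivity)).1 (hη.trans hη₀)
  rw [lt_div_iff₀ (by positivity)] at hη₀
  rw [sub_pos, div_lt_one hN]
  nlinarith

theorem contraction_factor_le_mul_of_div_le {N η g g' gL q : ℝ} (hN : 0 ≤ N) (hη : 0 ≤ η)
    (hg : g' ≤ g) (hL : 0 < 1 - 2 * η * gL / N) (hq : (1 - 2 * g' * η / N) / (1 - 2 * gL * η / N) ≤ q) :
    1 - 2 * η * g / N ≤ q * (1 - 2 * η * gL / N) := by
  rw [mul_right_comm 2 g', mul_right_comm 2 gL, div_le_iff₀ hL] at hq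
  calc 1 - 2 * η * g / N ≤ 1 - 2 * η * g' / N := by gcongr
    _ ≤ q * (1 - 2 * η * gL / N) := hq

section Rayleigh

variable {ι : Type*} [Fintype ι] [DecidableEq ι]

theorem mul_sum_erase_sq_le {v w : ι → ℝ} {j : ι} {c r δ : ℝ} (hc : 0 ≤ c) (hr : 0 ≤ r)
    (hratio : ∀ i ≠ j, v i ^ 2 * w j ^ 2 ≤ r * w i ^ 2 * v j ^ 2) (hw : w j ≠ 0)
    (hδ : c * r * ∑ i, w i ^ 2 ≤ δ * w j ^ 2) :
    c * ∑ i ∈ univ.erase j, v i ^ 2 ≤ δ * v j ^ 2 := by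
  have hsum : (∑ i ∈ univ.erase j, v i ^ 2) * w j ^ 2 ≤ r * (∑ i, w i ^ 2) * v j ^ 2 :=
    calc (∑ i ∈ univ.erase j, v i ^ 2) * w j ^ 2
        ≤ ∑ i ∈ univ.erase j, r * w i ^ 2 * v j ^ 2 := by
          rw [sum_mul]
          exact sum_le_sum fun i hi => hratio i (ne_of_mem_erase hi)
      _ ≤ ∑ i, r * w i ^ 2 * v j ^ 2 :=
          sum_le_sum_of_subset_of_nonneg (erase_subset _ _) fun _ _ _ => by positivity
      _ = r * (∑ i, w i ^ 2) * v j ^ 2 := by rw [mul_sum, sum_mul]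
  refine le_of_mul_le_mul_right ?_ (by positivity : 0 < w j ^ 2)
  calc c * (∑ i ∈ univ.erase j, v i ^ 2) * w j ^ 2
      ≤ c * (r * (∑ i, w i ^ 2) * v j ^ 2) := by rw [mul_assoc]; gcongr
    _ = c * r * (∑ i, w i ^ 2) * v j ^ 2 := by ring
    _ ≤ δ * w j ^ 2 * v j ^ 2 := by gcongr
    _ = δ * v j ^ 2 * w j ^ 2 := by ring

theorem rayleigh_quotient_mem_Icc {γ v : ι → ℝ} {j : ι} {M ε : ℝ} (hmin : ∀ i, γ j ≤ γ i)
    (hmax : ∀ i, γ i ≤ M) (hε : 0 ≤ ε) (hγ : 0 ≤ γ j) (hv : v j ≠ 0)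
    (hconc : M * ∑ i ∈ univ.erase j, v i ^ 2 ≤ ε * γ j * v j ^ 2) :
    γ j ≤ (∑ i, γ i * v i ^ 2) / ∑ i, v i ^ 2 ∧
      (∑ i, γ i * v i ^ 2) / ∑ i, v i ^ 2 ≤ (1 + ε) * γ j := by
  have hsplit : ∀ f : ι → ℝ, ∑ i, f i = f j + ∑ i ∈ univ.erase j, f i := fun f =>
    (add_sum_erase _ _ (mem_univ j)).symm
  have hrest : 0 ≤ ∑ i ∈ univ.erase j, v i ^ 2 := sum_nonneg fun _ _ => sq_nonneg _
  have hS : 0 < ∑ i, v i ^ 2 := by rw [hsplit]; positivity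
  have hlow : γ j * ∑ i, v i ^ 2 ≤ ∑ i, γ i * v i ^ 2 := by
    rw [mul_sum]; exact sum_le_sum fun i _ => by gcongr; exact hmin i
  have hhigh : ∑ i ∈ univ.erase j, γ i * v i ^ 2 ≤ M * ∑ i ∈ univ.erase j, v i ^ 2 := by
    rw [mul_sum]; exact sum_le_sum fun i _ => by gcongr; exact hmax i
  rw [le_div_iff₀ hS, div_le_iff₀ hS]
  refine ⟨hlow, ?_⟩
  rw [hsplit fun i => γ i * v i ^ 2, hsplit fun i => v i ^ 2]
  linarith [mul_nonneg (mul_nonneg (add_nonneg zero_le_one hε) hγ) hrest]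

end Rayleigh

theorem stmt_13_general (n : ℕ) (γ : Fin (n + 2) → ℝ) (hsort : Antitone γ)
    (hpos : 0 < γ (Fin.last (n + 1)))
    (η : ℕ → ℝ) (hη : ∀ k, 0 < η k ∧ η k < ((n : ℝ) + 2) / (2 * γ 0))
    (u : ℕ → Fin (n + 2) → ℝ)
    (hupd : ∀ k i, u (k + 1) i = (1 - 2 * η k * γ i / ((n : ℝ) + 2)) * u k i)
    (q ε : ℝ) (hq0 : 0 < q) (hq1 : q < 1) (hε : ε ∈ Set.Ioo (0 : ℝ) 1)
    (hqbound : ∀ t, (1 - 2 * γ ((Fin.last n).castSucc) * η t / ((n : ℝ) + 2)) /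
        (1 - 2 * γ (Fin.last (n + 1)) * η t / ((n : ℝ) + 2)) ≤ q)
    (hu0 : u 0 (Fin.last (n + 1)) ≠ 0)
    (k : ℕ)
    (hk : (k : ℝ) > (1 / 2) *
      Real.log (γ (Fin.last (n + 1)) * ε * (u 0 (Fin.last (n + 1))) ^ 2 /
        (γ 0 * ((n : ℝ) + 2) * ∑ i, (u 0 i) ^ 2)) / Real.log q) :
    γ (Fin.last (n + 1)) ≤ (∑ i, γ i * (u k i) ^ 2) / (∑ i, (u k i) ^ 2) ∧
    (∑ i, γ i * (u k i) ^ 2) / (∑ i, (u k i) ^ 2) ≤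
      (1 + ε) * γ (Fin.last (n + 1)) := by
  set N : ℝ := (n : ℝ) + 2
  set L := Fin.last (n + 1)
  set c : ℕ → Fin (n + 2) → ℝ := fun t i => 1 - 2 * η t * γ i / N
  have hγ0 : ∀ i, γ i ≤ γ 0 := fun i => hsort (Fin.zero_le i)
  have hγL : ∀ i, γ L ≤ γ i := fun i => hsort (Fin.le_last i)
  have hγ0_pos : 0 < γ 0 := hpos.trans_le (hγL 0)
  have hc_pos : ∀ t i, 0 < c t i := fun t i =>
    contraction_factor_pos (hη t).1 (hη t).2 hγ0_pos (hγ0 i)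
  have hc_ratio : ∀ t, ∀ i ≠ L, |c t i| ≤ q * |c t L| := fun t i hi => by
    rw [abs_of_pos (hc_pos t i), abs_of_pos (hc_pos t L)]
    exact contraction_factor_le_mul_of_div_le (by positivity) (hη t).1.le
      (hsort ((Fin.le_castSucc_iff (j := Fin.last n)).2 (Fin.lt_last_iff_ne_last.2 hi)))
      (hc_pos t L) (hqbound t)
  have hukL : u k L ≠ 0 :=
    iterate_ne_zero (x := (u · L)) (hupd · L) (fun t => (hc_pos t L).ne') hu0 k
  have hS0 : 0 < ∑ i, u 0 i ^ 2 :=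
    (by positivity : 0 < u 0 L ^ 2).trans_le
      (single_le_sum (fun i _ => sq_nonneg (u 0 i)) (mem_univ L))
  have hpow : q ^ (2 * k) < γ L * ε * u 0 L ^ 2 / (γ 0 * N * ∑ i, u 0 i ^ 2) := by
    refine pow_lt_of_log_div_log_lt hq0 hq1 ?_ ?_
    · have := hε.1; positivity
    · rw [mul_div_assoc] at hk; push_cast; linarith
  have hsmall : γ 0 * q ^ (2 * k) * ∑ i, u 0 i ^ 2 ≤ ε * γ L * u 0 L ^ 2 := by
    rw [lt_div_iff₀ (by positivity)] at hpow
    have hN : 1 ≤ N := le_add_of_nonneg_of_le (Nat.cast_nonneg n) one_le_two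
    calc γ 0 * q ^ (2 * k) * ∑ i, u 0 i ^ 2 = q ^ (2 * k) * (γ 0 * 1 * ∑ i, u 0 i ^ 2) := by
          ring
      _ ≤ q ^ (2 * k) * (γ 0 * N * ∑ i, u 0 i ^ 2) := by gcongr
      _ ≤ ε * γ L * u 0 L ^ 2 := by linarith
  exact rayleigh_quotient_mem_Icc hγL hγ0 hε.1.le hpos.le hukL <|
    mul_sum_erase_sq_le hγ0_pos.le (pow_pos hq0 _).le
      (fun i hi => sq_mul_sq_le_pow_mul (x := (u · i)) (y := (u · L)) (hupd · i) (hupd · L)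
        (fun t => hc_ratio t i hi) k)
      hu0 hsmall

/-- Directional bias of GD: under diagonal GD dynamics
`u_{k+1}⁽ⁱ⁾ = (1 - 2η_k γᵢ/N) u_k⁽ⁱ⁾` (`N = n+2` nonzero eigenvalues
`γ₀ ≥ … ≥ γ_{N-2} > γ_{N-1} > 0`, `0 < η_k < N/(2γ₀)`), if the contraction
ratios satisfy `(1-2γ_{N-2}η_t/N)/(1-2γ_{N-1}η_t/N) ≤ q < 1` and
`k > (1/2)·log(γ_{N-1} ε (u₀^{(N-1)})²/(γ₀ N ∑ᵢ(u₀⁽ⁱ⁾)²))/log q`, then the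
Rayleigh quotient of `u_k` lies in `[γ_{N-1}, (1+ε)γ_{N-1}]`. -/
theorem stmt_13 (n : ℕ) (γ : Fin (n + 2) → ℝ) (hsort : Antitone γ)
    (hpos : 0 < γ (Fin.last (n + 1)))
    (hstrict : γ (Fin.last (n + 1)) < γ ((Fin.last n).castSucc))
    (η : ℕ → ℝ) (hη : ∀ k, 0 < η k ∧ η k < ((n : ℝ) + 2) / (2 * γ 0))
    (u : ℕ → Fin (n + 2) → ℝ)
    (hupd : ∀ k i, u (k + 1) i = (1 - 2 * η k * γ i / ((n : ℝ) + 2)) * u k i)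
    (q ε : ℝ) (hq0 : 0 < q) (hq1 : q < 1) (hε : ε ∈ Set.Ioo (0 : ℝ) 1)
    (hqbound : ∀ t, (1 - 2 * γ ((Fin.last n).castSucc) * η t / ((n : ℝ) + 2)) /
        (1 - 2 * γ (Fin.last (n + 1)) * η t / ((n : ℝ) + 2)) ≤ q)
    (hu0 : u 0 (Fin.last (n + 1)) ≠ 0)
    (k : ℕ)
    (hk : (k : ℝ) > (1 / 2) *
      Real.log (γ (Fin.last (n + 1)) * ε * (u 0 (Fin.last (n + 1))) ^ 2 /
        (γ 0 * ((n : ℝ) + 2) * ∑ i, (u 0 i) ^ 2)) / Real.log q) :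
    γ (Fin.last (n + 1)) ≤ (∑ i, γ i * (u k i) ^ 2) / (∑ i, (u k i) ^ 2) ∧
    (∑ i, γ i * (u k i) ^ 2) / (∑ i, (u k i) ^ 2) ≤
      (1 + ε) * γ (Fin.last (n + 1)) :=
  stmt_13_general n γ hsort hpos η hη u hupd q ε hq0 hq1 hε hqbound hu0 k hk
end
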